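/- Let H be a complex Hilbert space, ψ ∈ H a unit vector, and A₀, A₁, B, Z : H →L[ℂ] H bounded self-adjoint operators, each squaring to the identity, such that A₀ and A₁ each commute with B and with Z. Let d = re⟪ψ, (A₀A₁ + A₁A₀)ψ⟫ / 2. Then |re⟪ψ, (A₀B + A₁B + A₀Z − A₁Z)ψ⟫| ≤ √(2(1 + d)) + √(2(1 − d)). -/

import Mathlib

/-!
Since `A₀` and `A₁` are self-adjoint, the Bell expression is
`re⟪(A₀ + A₁)ψ, Bψ⟫ + re⟪(A₀ - A₁)ψ, Zψ⟫`, and Cauchy–Schwarz bounds it by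
`‖(A₀ + A₁)ψ‖ + ‖(A₀ - A₁)ψ‖`, because the involutions `B` and `Z` are unitary. For involutions
`‖(A₀ ± A₁)ψ‖² = 2 ± ⟨{A₀, A₁}⟩ = 2(1 ± d)`.
-/

open ContinuousLinearMap

theorem IsSelfAdjoint.mem_unitary_of_mul_self_eq_one {R : Type*} [Monoid R] [StarMul R] {u : R}
    (hu : IsSelfAdjoint u) (h : u * u = 1) : u ∈ unitary R :=
  Unitary.mem_iff.2 ⟨by rw [hu.star_eq, h], by rw [hu.star_eq, h]⟩

section SelfAdjoint

open RCLike

variable {𝕜 E : Type*} [RCLike 𝕜] [NormedAddCommGroup E] [InnerProductSpace 𝕜 E] [CompleteSpace E]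

local notation "⟪" x ", " y "⟫" => inner 𝕜 x y

theorem IsSelfAdjoint.norm_apply_of_mul_self_eq_one {T : E →L[𝕜] E} (hT : IsSelfAdjoint T)
    (hsq : T * T = 1) (x : E) : ‖T x‖ = ‖x‖ :=
  norm_map_of_mem_unitary (hT.mem_unitary_of_mul_self_eq_one hsq) x

theorem IsSelfAdjoint.inner_mul_apply {X : E →L[𝕜] E} (hX : IsSelfAdjoint X) (Y : E →L[𝕜] E)
    (x y : E) : ⟪x, (X * Y) y⟫ = ⟪X x, Y y⟫ :=
  (hX.isSymmetric x (Y y)).symm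

theorem IsSelfAdjoint.re_inner_anticommutator_apply {A₀ A₁ : E →L[𝕜] E} (h₀ : IsSelfAdjoint A₀)
    (h₁ : IsSelfAdjoint A₁) (x : E) :
    re ⟪x, (A₀ * A₁ + A₁ * A₀) x⟫ = 2 * re ⟪A₀ x, A₁ x⟫ := by
  rw [add_apply, inner_add_right, map_add, h₀.inner_mul_apply, h₁.inner_mul_apply,
    inner_re_symm (A₁ x)]
  ring

theorem IsSelfAdjoint.inner_chsh_operator_apply {A₀ A₁ : E →L[𝕜] E} (h₀ : IsSelfAdjoint A₀)
    (h₁ : IsSelfAdjoint A₁) (B Z : E →L[𝕜] E) (x : E) :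
    ⟪x, (A₀ * B + A₁ * B + A₀ * Z - A₁ * Z) x⟫ = ⟪(A₀ + A₁) x, B x⟫ + ⟪(A₀ - A₁) x, Z x⟫ := by
  simp only [add_apply, sub_apply, inner_add_right, inner_sub_right, inner_add_left,
    inner_sub_left, h₀.inner_mul_apply, h₁.inner_mul_apply]
  ring

variable {A₀ A₁ : E →L[𝕜] E} (h₀ : IsSelfAdjoint A₀) (h₁ : IsSelfAdjoint A₁)
  (hsq₀ : A₀ * A₀ = 1) (hsq₁ : A₁ * A₁ = 1)
include h₀ h₁ hsq₀ hsq₁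

theorem norm_add_apply_sq_of_involutions (x : E) :
    ‖(A₀ + A₁) x‖ ^ 2 = 2 * ‖x‖ ^ 2 + re ⟪x, (A₀ * A₁ + A₁ * A₀) x⟫ := by
  rw [add_apply, norm_add_sq (𝕜 := 𝕜), h₀.re_inner_anticommutator_apply h₁,
    h₀.norm_apply_of_mul_self_eq_one hsq₀, h₁.norm_apply_of_mul_self_eq_one hsq₁]
  ring

theorem norm_sub_apply_sq_of_involutions (x : E) :
    ‖(A₀ - A₁) x‖ ^ 2 = 2 * ‖x‖ ^ 2 - re ⟪x, (A₀ * A₁ + A₁ * A₀) x⟫ := by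
  rw [sub_apply, norm_sub_sq (𝕜 := 𝕜), h₀.re_inner_anticommutator_apply h₁,
    h₀.norm_apply_of_mul_self_eq_one hsq₀, h₁.norm_apply_of_mul_self_eq_one hsq₁]
  ring

end SelfAdjoint

theorem tripartite_chsh_bound_general
    {H : Type*} [NormedAddCommGroup H] [InnerProductSpace ℂ H] [CompleteSpace H]
    (ψ : H) (hψ : ‖ψ‖ = 1)
    (A₀ A₁ B Z : H →L[ℂ] H)
    (hsa : ∀ X ∈ [A₀, A₁, B, Z], IsSelfAdjoint X)
    (hsq : ∀ X ∈ [A₀, A₁, B, Z], X * X = 1)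
    (d : ℝ) (hd : d = (inner ℂ ψ ((A₀ * A₁ + A₁ * A₀) ψ) : ℂ).re / 2) :
    |(inner ℂ ψ ((A₀ * B + A₁ * B + A₀ * Z - A₁ * Z) ψ) : ℂ).re| ≤
      Real.sqrt (2 * (1 + d)) + Real.sqrt (2 * (1 - d)) := by
  have hA₀ := hsa A₀ (by simp)
  have hA₁ := hsa A₁ (by simp)
  have hsq₀ := hsq A₀ (by simp)
  have hsq₁ := hsq A₁ (by simp)
  have hBψ : ‖B ψ‖ = 1 :=
    ((hsa B (by simp)).norm_apply_of_mul_self_eq_one (hsq B (by simp)) ψ).trans hψ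
  have hZψ : ‖Z ψ‖ = 1 :=
    ((hsa Z (by simp)).norm_apply_of_mul_self_eq_one (hsq Z (by simp)) ψ).trans hψ
  have hplus : ‖(A₀ + A₁) ψ‖ = √(2 * (1 + d)) := by
    rw [← Real.sqrt_sq (norm_nonneg _), norm_add_apply_sq_of_involutions hA₀ hA₁ hsq₀ hsq₁, hψ,
      RCLike.re_to_complex, hd]
    ring_nf
  have hminus : ‖(A₀ - A₁) ψ‖ = √(2 * (1 - d)) := by
    rw [← Real.sqrt_sq (norm_nonneg _), norm_sub_apply_sq_of_involutions hA₀ hA₁ hsq₀ hsq₁, hψ,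
      RCLike.re_to_complex, hd]
    ring_nf
  calc |(inner ℂ ψ ((A₀ * B + A₁ * B + A₀ * Z - A₁ * Z) ψ) : ℂ).re|
      ≤ ‖inner ℂ ((A₀ + A₁) ψ) (B ψ) + inner ℂ ((A₀ - A₁) ψ) (Z ψ)‖ :=
        hA₀.inner_chsh_operator_apply hA₁ B Z ψ ▸ Complex.abs_re_le_norm _
    _ ≤ ‖(A₀ + A₁) ψ‖ * ‖B ψ‖ + ‖(A₀ - A₁) ψ‖ * ‖Z ψ‖ :=
        (norm_add_le _ _).trans (add_le_add (norm_inner_le_norm _ _) (norm_inner_le_norm _ _))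
    _ = √(2 * (1 + d)) + √(2 * (1 - d)) := by rw [hBψ, hZψ, hplus, hminus, mul_one, mul_one]

/-- For self-adjoint involutions `A₀, A₁, B, Z` with `A₀, A₁` each
commuting with `B` and `Z`, and `d = ⟨{A₀, A₁}⟩/2`, the CHSH-type parameter
`⟨A₀B + A₁B + A₀Z - A₁Z⟩` is bounded by `√(2(1 + d)) + √(2(1 - d))`. -/
theorem tripartite_chsh_bound
    {H : Type*} [NormedAddCommGroup H] [InnerProductSpace ℂ H] [CompleteSpace H]
    (ψ : H) (hψ : ‖ψ‖ = 1)
    (A₀ A₁ B Z : H →L[ℂ] H)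
    (hsa : ∀ X ∈ [A₀, A₁, B, Z], IsSelfAdjoint X)
    (hsq : ∀ X ∈ [A₀, A₁, B, Z], X * X = 1)
    (hB : ∀ i ∈ [A₀, A₁], i * B = B * i)
    (hZ : ∀ i ∈ [A₀, A₁], i * Z = Z * i)
    (d : ℝ) (hd : d = (inner ℂ ψ ((A₀ * A₁ + A₁ * A₀) ψ) : ℂ).re / 2) :
    |(inner ℂ ψ ((A₀ * B + A₁ * B + A₀ * Z - A₁ * Z) ψ) : ℂ).re| ≤
      Real.sqrt (2 * (1 + d)) + Real.sqrt (2 * (1 - d)) :=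
  tripartite_chsh_bound_general ψ hψ A₀ A₁ B Z hsa hsq d hd
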